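/- Along trajectories of the dimensionless tethered-system dynamics α̈ + 2(λ̇/(λ+1))(1+α̇) + 3 cos α sin α = 0 and λ̈ - (λ+1)[(1+α̇)² - 1 + 3cos²α] = -u + d, the time derivative of V = (1/2)[λ̇² + k₁λ² + k₂((1/3)α̇² + sin²α) + 3(λ+1)²((1/3)α̇² + sin²α)] equals λ̇[3(λ+1) - u + d + k₁λ - (2/3)k₂ α̇ (1+α̇)/(1+λ)]. -/

import Mathlib

/-!
Differentiate `V` by the product and chain rules and substitute the two equations of motion.
With `q = λ̇/(λ+1)`, the attitude equation makes `α̇ α̈ / 3 + α̇ sin α cos α = -(2/3) q α̇ (1+α̇)`,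
and the only cancellation needed is `(λ+1)² q = (λ+1) λ̇`, which holds even at `λ = -1`
since division by zero gives `0` there.
-/

open Real

theorem hasDerivAt_third_sq_add_sin_sq {α ω : ℝ → ℝ} {α' ω' τ : ℝ}
    (hα : HasDerivAt α α' τ) (hω : HasDerivAt ω ω' τ) :
    HasDerivAt (fun t => (1/3) * ω t ^ 2 + sin (α t) ^ 2)
      ((1/3) * (2 * ω τ * ω') + 2 * sin (α τ) * cos (α τ) * α') τ := by
  refine ((hω.fun_pow 2).const_mul (1/3 : ℝ) |>.add (hα.sin.fun_pow 2)).congr_deriv ?_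
  ring

theorem hasDerivAt_tether_lyapunov {α ω l v : ℝ → ℝ} {α' ω' l' v' τ : ℝ} (k₁ k₂ : ℝ)
    (hα : HasDerivAt α α' τ) (hω : HasDerivAt ω ω' τ)
    (hl : HasDerivAt l l' τ) (hv : HasDerivAt v v' τ) :
    HasDerivAt (fun t => (1/2) * (v t ^ 2 + k₁ * l t ^ 2
        + k₂ * ((1/3) * ω t ^ 2 + sin (α t) ^ 2)
        + 3 * (l t + 1) ^ 2 * ((1/3) * ω t ^ 2 + sin (α t) ^ 2)))
      (v τ * v' + k₁ * l τ * l'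
        + (k₂ + 3 * (l τ + 1) ^ 2)
          * ((1/3) * (2 * ω τ * ω') + 2 * sin (α τ) * cos (α τ) * α') / 2
        + 3 * (l τ + 1) * l' * ((1/3) * ω τ ^ 2 + sin (α τ) ^ 2)) τ := by
  have hW := hasDerivAt_third_sq_add_sin_sq hα hω
  have hL := ((hl.add_const 1).fun_pow 2).const_mul (3 : ℝ)
  refine (((hv.fun_pow 2).add ((hl.fun_pow 2).const_mul k₁) |>.add (hW.const_mul k₂)
    |>.add (hL.mul hW)).const_mul (1/2 : ℝ)).congr_deriv ?_
  ring

theorem sq_mul_div_self {K : Type*} [Field K] (L v : K) : L ^ 2 * (v / L) = L * v :=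
  calc L ^ 2 * (v / L) = L * L / L * v := by ring
    _ = L * v := by rw [mul_self_div_self]

theorem tether_lyapunov_rate_eq (a ω l v k₁ k₂ u d : ℝ) :
    v * ((l + 1) * ((1 + ω) ^ 2 - 1 + 3 * cos a ^ 2) - u + d) + k₁ * l * v
      + (k₂ + 3 * (l + 1) ^ 2)
        * ((1/3) * (2 * ω * (-2 * (v / (l + 1)) * (1 + ω) - 3 * cos a * sin a))
          + 2 * sin a * cos a * ω) / 2
      + 3 * (l + 1) * v * ((1/3) * ω ^ 2 + sin a ^ 2)
    = v * (3 * (l + 1) - u + d + k₁ * l - (2/3) * k₂ * ω * (1 + ω) / (1 + l)) := by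
  linear_combination (-2 * ω * (1 + ω)) * sq_mul_div_self (l + 1) v
    + (3 * (l + 1) * v) * sin_sq_add_cos_sq a

theorem lyapunov_derivative_general (α lam u d : ℝ → ℝ) (k₁ k₂ : ℝ)
    (hα : Differentiable ℝ α) (hα' : Differentiable ℝ (deriv α))
    (hl : Differentiable ℝ lam) (hl' : Differentiable ℝ (deriv lam))
    (hode1 : ∀ τ, deriv (deriv α) τ
      = -2 * (deriv lam τ / (lam τ + 1)) * (1 + deriv α τ)
        - 3 * Real.cos (α τ) * Real.sin (α τ))
    (hode2 : ∀ τ, deriv (deriv lam) τ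
      = (lam τ + 1) * ((1 + deriv α τ) ^ 2 - 1 + 3 * (Real.cos (α τ)) ^ 2) - u τ + d τ)
    (τ : ℝ) :
    deriv (fun t => (1/2) * ((deriv lam t) ^ 2 + k₁ * (lam t) ^ 2
      + k₂ * ((1/3) * (deriv α t) ^ 2 + (Real.sin (α t)) ^ 2)
      + 3 * (lam t + 1) ^ 2 * ((1/3) * (deriv α t) ^ 2 + (Real.sin (α t)) ^ 2))) τ
    = deriv lam τ * (3 * (lam τ + 1) - u τ + d τ + k₁ * lam τ
        - (2/3) * k₂ * deriv α τ * (1 + deriv α τ) / (1 + lam τ)) := by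
  rw [(hasDerivAt_tether_lyapunov k₁ k₂ (hα τ).hasDerivAt (hα' τ).hasDerivAt
    (hl τ).hasDerivAt (hl' τ).hasDerivAt).deriv, hode1, hode2]
  exact tether_lyapunov_rate_eq _ _ _ _ k₁ k₂ _ _

theorem lyapunov_derivative (α lam u d : ℝ → ℝ) (k₁ k₂ : ℝ)
    (hα : Differentiable ℝ α) (hα' : Differentiable ℝ (deriv α))
    (hl : Differentiable ℝ lam) (hl' : Differentiable ℝ (deriv lam))
    (hlam : ∀ τ, lam τ > -1)
    (hode1 : ∀ τ, deriv (deriv α) τ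
      = -2 * (deriv lam τ / (lam τ + 1)) * (1 + deriv α τ)
        - 3 * Real.cos (α τ) * Real.sin (α τ))
    (hode2 : ∀ τ, deriv (deriv lam) τ
      = (lam τ + 1) * ((1 + deriv α τ) ^ 2 - 1 + 3 * (Real.cos (α τ)) ^ 2) - u τ + d τ)
    (τ : ℝ) :
    deriv (fun t => (1/2) * ((deriv lam t) ^ 2 + k₁ * (lam t) ^ 2
      + k₂ * ((1/3) * (deriv α t) ^ 2 + (Real.sin (α t)) ^ 2)
      + 3 * (lam t + 1) ^ 2 * ((1/3) * (deriv α t) ^ 2 + (Real.sin (α t)) ^ 2))) τ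
    = deriv lam τ * (3 * (lam τ + 1) - u τ + d τ + k₁ * lam τ
        - (2/3) * k₂ * deriv α τ * (1 + deriv α τ) / (1 + lam τ)) :=
  lyapunov_derivative_general α lam u d k₁ k₂ hα hα' hl hl' hode1 hode2 τ
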